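/- arXiv:1505.06509 — 3 statements merged into one kernel-verified Lean document; each statement's English description precedes it below -/
import Mathlib

section
/- Suppose M : ℝ → Matrix (Fin n) (Fin n) ℝ is smooth, M(z)^2 = c • 1 for a constant c ∈ ℝ and all z, and the second derivative of M vanishes identically (M is affine in z). Let O F = F' + M * F. Then for all natural numbers k, (O^{2k} M)(z) = M(z) * ((O M)(z))^k and (O^{2k+1} M)(z) = ((O M)(z))^{k+1}. -/
attribute [local instance] Matrix.normedAddCommGroup Matrix.normedSpace

theorem stmt_2 (n : ℕ) (c : ℝ)
    (M : ℝ → Matrix (Fin n) (Fin n) ℝ)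
    (hM : ContDiff ℝ (⊤ : ℕ∞) M)
    (hsq : ∀ z, M z * M z = c • (1 : Matrix (Fin n) (Fin n) ℝ))
    (haff : ∀ z, deriv (deriv M) z = 0)
    (O : (ℝ → Matrix (Fin n) (Fin n) ℝ) → (ℝ → Matrix (Fin n) (Fin n) ℝ))
    (hO : ∀ F z, O F z = deriv F z + M z * F z) :
    ∀ (k : ℕ) (z : ℝ),
      O^[2 * k] M z = M z * (O M z) ^ k ∧
      O^[2 * k + 1] M z = (O M z) ^ (k + 1) := by
  have hMd : Differentiable ℝ M := hM.differentiable (by simp)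
  have hM2 : ContDiff ℝ ((⊤ : ℕ∞) : WithTop ℕ∞) M := hM.of_le (by simp)
  have hM'd : Differentiable ℝ (deriv M) :=
    ((contDiff_infty_iff_deriv.mp hM2).2).differentiable (by simp)
  set A := deriv M 0 with hAdef
  have hA : ∀ z, deriv M z = A := fun z =>
    is_const_of_deriv_eq_zero hM'd haff z 0
  set P := A + c • (1 : Matrix (Fin n) (Fin n) ℝ) with hPdef
  have hOM : ∀ z, O M z = P := by
    intro z; rw [hO, hsq, hA]
  have hderiv_mul : ∀ (C : Matrix (Fin n) (Fin n) ℝ) (z : ℝ),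
      deriv (fun w => M w * C) z = A * C := by
    intro C z
    let L : Matrix (Fin n) (Fin n) ℝ →ₗ[ℝ] Matrix (Fin n) (Fin n) ℝ :=
      { toFun := fun X => X * C
        map_add' := fun X Y => add_mul X Y C
        map_smul' := fun r X => smul_mul_assoc r X C }
    have h := (L.toContinuousLinearMap.hasFDerivAt.comp_hasDerivAt z
      (hMd z).hasDerivAt)
    have := h.deriv
    rw [← hA z]; exact this
  intro k
  induction k with
  | zero =>
    intro z
    refine ⟨by simp, by simp⟩
  | succ k ih =>
    -- O^[2k+1] M is the constant function P^(k+1)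
    have hodd : O^[2 * k + 1] M = fun _ => P ^ (k + 1) := by
      funext w
      rw [(ih w).2, hOM w]
    have heven2 : ∀ z, O^[2 * (k + 1)] M z = M z * P ^ (k + 1) := by
      intro z
      have : 2 * (k + 1) = (2 * k + 1) + 1 := by ring
      rw [this, Function.iterate_succ_apply', hO, hodd]
      simp
      exact deriv_const _ _
    intro z
    constructor
    · rw [heven2 z, hOM z]
    · have : 2 * (k + 1) + 1 = (2 * (k + 1)) + 1 := rfl
      rw [this, Function.iterate_succ_apply', hO]
      have hfun : O^[2 * (k + 1)] M = fun w => M w * P ^ (k + 1) := funext heven2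
      rw [hfun, hderiv_mul]
      beta_reduce
      rw [← mul_assoc, hsq z, smul_mul_assoc, one_mul, hOM z]
      rw [show (k + 1) + 1 = (k + 2) from rfl, pow_succ' P (k + 1), hPdef,
        add_mul, smul_mul_assoc, one_mul]
end

section
/- Under the hypotheses M² ≡ 0, (M')² ≡ 0, M'' ≡ C constant (with the derived anticommutation relations), for all natural k: (O^{3k} M)(z) = 2^k · M(z) · C^k, (O^{3k+1} M)(z) = 2^k · M'(z) · C^k, and (O^{3k+2} M)(z) = 2^k · (C + M(z)·M'(z)) · C^k. -/
attribute [local instance] Matrix.normedAddCommGroup Matrix.normedSpace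

theorem aux_hasDerivAt_mul {n : ℕ} {f g : ℝ → Matrix (Fin n) (Fin n) ℝ}
    {f' g' : Matrix (Fin n) (Fin n) ℝ} {z : ℝ}
    (hf : HasDerivAt f f' z) (hg : HasDerivAt g g' z) :
    HasDerivAt (fun z => f z * g z) (f' * g z + f z * g') z := by
  letI : NormedRing (Matrix (Fin n) (Fin n) ℝ) := Matrix.linftyOpNormedRing
  letI : NormedAlgebra ℝ (Matrix (Fin n) (Fin n) ℝ) := Matrix.linftyOpNormedAlgebra
  have := HasDerivAt.mul (by exact hf) (by exact hg)
  exact this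

theorem stmt_7 (n : ℕ)
    (M : ℝ → Matrix (Fin n) (Fin n) ℝ) (hM : ContDiff ℝ (⊤ : ℕ∞) M)
    (C : Matrix (Fin n) (Fin n) ℝ)
    (hsq : ∀ z, M z * M z = 0)
    (hdsq : ∀ z, deriv M z * deriv M z = 0)
    (hconst : ∀ z, deriv (deriv M) z = C)
    (O : (ℝ → Matrix (Fin n) (Fin n) ℝ) → (ℝ → Matrix (Fin n) (Fin n) ℝ))
    (hO : ∀ F z, O F z = deriv F z + M z * F z) :
    ∀ (k : ℕ) (z : ℝ),
      O^[3 * k] M z = ((2 : ℝ) ^ k) • (M z * C ^ k) ∧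
      O^[3 * k + 1] M z = ((2 : ℝ) ^ k) • (deriv M z * C ^ k) ∧
      O^[3 * k + 2] M z = ((2 : ℝ) ^ k) • ((C + M z * deriv M z) * C ^ k) := by
  -- basic differentiability facts
  have hMd : ∀ z, HasDerivAt M (deriv M z) z := fun z =>
    ((hM.differentiable (by simp)) z).hasDerivAt
  have hM'd : ∀ z, HasDerivAt (deriv M) C z := by
    intro z
    have hM2 : ContDiff ℝ (↑(⊤ : ℕ∞)) M := hM.of_le (by simp)
    have hd2 : ContDiff ℝ (↑(⊤ : ℕ∞)) (deriv M) := (contDiff_infty_iff_deriv.mp hM2).2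
    have h := ((hd2.differentiable (by simp)) z).hasDerivAt
    exact h.congr_deriv (hconst z)
  -- general step lemma
  have hstep : ∀ (m : ℕ) (G G' : ℝ → Matrix (Fin n) (Fin n) ℝ),
      (∀ z, O^[m] M z = G z) → (∀ z, HasDerivAt G (G' z) z) →
      ∀ z, O^[m + 1] M z = G' z + M z * G z := by
    intro m G G' hG hG' z
    rw [Function.iterate_succ_apply', hO]
    have hfun : O^[m] M = G := funext hG
    rw [hfun]
    exact congrArg (· + M z * G z) (hG' z).deriv
  -- step 1 : from 2^k • (M * C^k) to 2^k • (M' * C^k)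
  have step1 : ∀ (m k : ℕ),
      (∀ z, O^[m] M z = ((2 : ℝ) ^ k) • (M z * C ^ k)) →
      ∀ z, O^[m + 1] M z = ((2 : ℝ) ^ k) • (deriv M z * C ^ k) := by
    intro m k h z
    have hd : ∀ z, HasDerivAt (fun z => ((2 : ℝ) ^ k) • (M z * C ^ k))
        (((2 : ℝ) ^ k) • (deriv M z * C ^ k)) z := by
      intro z
      have := (aux_hasDerivAt_mul (hMd z) (hasDerivAt_const z (C ^ k))).const_smul ((2:ℝ)^k)
      simp at this
      exact this
    have := hstep m _ _ h hd z
    rw [this, mul_smul_comm, ← mul_assoc, hsq z, zero_mul, smul_zero, add_zero]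
  -- step 2 : from 2^k • (M' * C^k) to 2^k • ((C + M*M') * C^k)
  have step2 : ∀ (m k : ℕ),
      (∀ z, O^[m] M z = ((2 : ℝ) ^ k) • (deriv M z * C ^ k)) →
      ∀ z, O^[m + 1] M z = ((2 : ℝ) ^ k) • ((C + M z * deriv M z) * C ^ k) := by
    intro m k h z
    have hd : ∀ z, HasDerivAt (fun z => ((2 : ℝ) ^ k) • (deriv M z * C ^ k))
        (((2 : ℝ) ^ k) • (C * C ^ k)) z := by
      intro z
      have := (aux_hasDerivAt_mul (hM'd z) (hasDerivAt_const z (C ^ k))).const_smul ((2:ℝ)^k)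
      simp at this
      exact this
    have := hstep m _ _ h hd z
    rw [this, mul_smul_comm, ← mul_assoc, ← smul_add, ← add_mul]
  -- step 3 : from 2^k • ((C + M*M') * C^k) to 2^(k+1) • (M * C^(k+1))
  have step3 : ∀ (m k : ℕ),
      (∀ z, O^[m] M z = ((2 : ℝ) ^ k) • ((C + M z * deriv M z) * C ^ k)) →
      ∀ z, O^[m + 1] M z = ((2 : ℝ) ^ (k + 1)) • (M z * C ^ (k + 1)) := by
    intro m k h z
    have hd : ∀ z, HasDerivAt (fun z => ((2 : ℝ) ^ k) • ((C + M z * deriv M z) * C ^ k))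
        (((2 : ℝ) ^ k) • ((M z * C) * C ^ k)) z := by
      intro z
      have hin : HasDerivAt (fun z => C + M z * deriv M z) (M z * C) z := by
        have := (hasDerivAt_const z C).add (aux_hasDerivAt_mul (hMd z) (hM'd z))
        simp [hdsq z] at this
        exact this
      have := (aux_hasDerivAt_mul hin (hasDerivAt_const z (C ^ k))).const_smul ((2:ℝ)^k)
      simp at this
      exact this
    have := hstep m _ _ h hd z
    have key : M z * ((C + M z * deriv M z) * C ^ k) = M z * C * C ^ k := by
      rw [← mul_assoc, mul_add, ← mul_assoc (M z) (M z), hsq z, zero_mul, add_zero]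
    rw [this, mul_smul_comm, key, ← two_smul ℝ, smul_smul, mul_assoc, ← pow_succ',
      ← pow_succ']
  -- main induction
  intro k
  induction k with
  | zero =>
    have h0 : ∀ z, O^[3 * 0] M z = ((2 : ℝ) ^ 0) • (M z * C ^ 0) := by
      intro z; simp
    have h1 := step1 0 0 (by simpa using h0)
    have h2 := step2 1 0 (by simpa using h1)
    intro z
    exact ⟨h0 z, by simpa using h1 z, by simpa using h2 z⟩
  | succ k ih =>
    have h0 : ∀ z, O^[3 * k] M z = ((2 : ℝ) ^ k) • (M z * C ^ k) := fun z => (ih z).1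
    have h1 := step1 (3 * k) k h0
    have h2 := step2 (3 * k + 1) k (by simpa using h1)
    have h3 := step3 (3 * k + 2) k (by simpa using h2)
    have e0 : 3 * (k + 1) = 3 * k + 2 + 1 := by ring
    have h0' : ∀ z, O^[3 * (k + 1)] M z = ((2 : ℝ) ^ (k + 1)) • (M z * C ^ (k + 1)) := by
      intro z; rw [e0]; exact h3 z
    have h1' := step1 (3 * (k + 1)) (k + 1) h0'
    have h2' := step2 (3 * (k + 1) + 1) (k + 1) h1'
    intro z
    exact ⟨h0' z, by simpa using h1' z, by simpa using h2' z⟩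
end

section
/- The function y_{WKB}(t) = (1−t²)^{-1/4} · sin(√λ · g(t)), with g(t) = ½(t√(1−t²) + arcsin t) and λ = 16n² for a positive integer n, tends to 0 as t → 1⁻ despite the factor (1−t²)^{-1/4} diverging; more precisely, sin(√λ g(t)) = O((1−t)^{3/2}) as t → 1⁻, so y_{WKB}(t) = O((1−t)^{5/4}) → 0. -/
/-!
With `θ = arccos t` and `x = 2θ`, the phase satisfies `4 g(t) = π - (x - sin x)`, so
`|sin (4n g(t))| = |sin (n (x - sin x))| ≤ n x³ / 6`. Jordan's inequality `x ≤ π sin θ` gives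
`x² ≤ π² (1 - t²) ≤ 2π² (1 - t)`, hence the `O((1 - t)^{3/2})` bound; the prefactor
`(1 - t²)^{-1/4}` is at most `(1 - t)^{-1/4}`, which leaves `O((1 - t)^{5/4})`.
-/

open Real Asymptotics Filter Set Topology

noncomputable def wkbPhase (t : ℝ) : ℝ := (t * √(1 - t ^ 2) + arcsin t) / 2

lemma four_mul_wkbPhase {t : ℝ} (h₁ : -1 ≤ t) (h₂ : t ≤ 1) :
    4 * wkbPhase t = π - (2 * arccos t - sin (2 * arccos t)) := by
  rw [wkbPhase, sin_two_mul, sin_arccos, cos_arccos h₁ h₂, arcsin_eq_pi_div_two_sub_arccos]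
  ring

lemma abs_sin_nat_mul_pi_sub_le (n : ℕ) (y : ℝ) : |sin (n * π - y)| ≤ |y| := by
  rw [sin_nat_mul_pi_sub, abs_neg, abs_mul, abs_pow, abs_neg, abs_one, one_pow, one_mul]
  exact abs_sin_le_abs

lemma sq_two_mul_arccos_le {t : ℝ} (h₀ : 0 ≤ t) (h₁ : t ≤ 1) :
    (2 * arccos t) ^ 2 ≤ 2 * π ^ 2 * (1 - t) := by
  have hθ : 2 * arccos t ≤ π * sin (arccos t) := by
    have := mul_le_sin (arccos_nonneg t) (arccos_le_pi_div_two.2 h₀)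
    rw [div_mul_eq_mul_div, div_le_iff₀ pi_pos] at this
    linarith
  calc (2 * arccos t) ^ 2 ≤ (π * sin (arccos t)) ^ 2 :=
        pow_le_pow_left₀ (by linarith [arccos_nonneg t]) hθ 2
    _ = π ^ 2 * (1 - t ^ 2) := by
        rw [mul_pow, sin_arccos, sq_sqrt (by nlinarith)]
    _ ≤ 2 * π ^ 2 * (1 - t) := by nlinarith [mul_nonneg (sq_nonneg π) (sq_nonneg (1 - t))]

lemma pow_three_le_rpow_of_sq_le {x a : ℝ} (hx : 0 ≤ x) (h : x ^ 2 ≤ a) :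
    x ^ 3 ≤ a ^ (3 / 2 : ℝ) := by
  calc x ^ 3 = (x ^ 2) ^ (3 / 2 : ℝ) := by
        rw [← rpow_natCast x 2, ← rpow_mul hx]; norm_num
    _ ≤ a ^ (3 / 2 : ℝ) := by gcongr

lemma abs_sin_mul_wkbPhase_le (n : ℕ) {t : ℝ} (h₀ : 0 ≤ t) (h₁ : t ≤ 1) :
    |sin (4 * n * wkbPhase t)| ≤ n / 6 * (2 * π ^ 2) ^ (3 / 2 : ℝ) * (1 - t) ^ (3 / 2 : ℝ) := by
  set x := 2 * arccos t
  have hx : 0 ≤ x := by positivity [arccos_nonneg t]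
  have hphase : 4 * n * wkbPhase t = n * π - n * (x - sin x) := by
    rw [mul_right_comm, four_mul_wkbPhase (by linarith) h₁]; ring
  calc |sin (4 * n * wkbPhase t)| ≤ |n * (x - sin x)| := by
        rw [hphase]; exact abs_sin_nat_mul_pi_sub_le n _
    _ = n * (x - sin x) := abs_of_nonneg (by have := sin_le hx; positivity)
    _ ≤ n * (x ^ 3 / 6) := by gcongr; linarith [sin_ge_sub_cube hx]
    _ ≤ n * ((2 * π ^ 2 * (1 - t)) ^ (3 / 2 : ℝ) / 6) := by
        gcongr; exact pow_three_le_rpow_of_sq_le hx (sq_two_mul_arccos_le h₀ h₁)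
    _ = n / 6 * (2 * π ^ 2) ^ (3 / 2 : ℝ) * (1 - t) ^ (3 / 2 : ℝ) := by
        rw [mul_rpow (by positivity) (by linarith)]; ring

lemma Icc_zero_one_mem_nhdsLT_one : Icc (0 : ℝ) 1 ∈ 𝓝[<] 1 :=
  mem_of_superset (Ioo_mem_nhdsLT zero_lt_one) Ioo_subset_Icc_self

lemma isBigO_sin_mul_wkbPhase (n : ℕ) :
    (fun t => sin (4 * n * wkbPhase t)) =O[𝓝[<] 1] (fun t => (1 - t) ^ (3 / 2 : ℝ)) := by
  refine IsBigO.of_bound (n / 6 * (2 * π ^ 2) ^ (3 / 2 : ℝ)) ?_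
  filter_upwards [Icc_zero_one_mem_nhdsLT_one] with t ht
  rw [norm_eq_abs, norm_eq_abs, abs_of_nonneg (rpow_nonneg (by linarith [ht.2]) _)]
  exact abs_sin_mul_wkbPhase_le n ht.1 ht.2

lemma isBigO_one_sub_sq_rpow_neg :
    (fun t : ℝ => (1 - t ^ 2) ^ (-(1 / 4) : ℝ)) =O[𝓝[<] 1] (fun t => (1 - t) ^ (-(1 / 4) : ℝ)) := by
  refine IsBigO.of_bound 1 ?_
  filter_upwards [Ioo_mem_nhdsLT zero_lt_one] with t ⟨h₀, h₁⟩
  rw [norm_eq_abs, norm_eq_abs, one_mul, abs_of_nonneg (rpow_nonneg (by nlinarith) _),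
    abs_of_nonneg (rpow_nonneg (by linarith) _)]
  exact rpow_le_rpow_of_nonpos (by linarith) (by nlinarith) (by norm_num)

lemma tendsto_one_sub_rpow_nhdsLT_one {p : ℝ} (hp : 0 < p) :
    Tendsto (fun t : ℝ => (1 - t) ^ p) (𝓝[<] 1) (𝓝 0) := by
  have : ContinuousAt (fun t : ℝ => (1 - t) ^ p) 1 :=
    (continuous_const.sub continuous_id).continuousAt.rpow_const (Or.inr hp.le)
  simpa [zero_rpow hp.ne'] using this.tendsto.mono_left nhdsWithin_le_nhds

open Real Asymptotics Filter in
theorem stmt_16_general (n : ℕ) (lam : ℝ) (hlam : lam = 16 * (n : ℝ) ^ 2)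
    (g : ℝ → ℝ)
    (hg : ∀ t, g t = (t * sqrt (1 - t ^ 2) + arcsin t) / 2) :
    (fun t => Real.sin (sqrt lam * g t)) =O[nhdsWithin 1 (Set.Iio 1)]
      (fun t => (1 - t) ^ (3 / 2 : ℝ)) ∧
    (fun t => (1 - t ^ 2) ^ (-(1 / 4) : ℝ) * Real.sin (sqrt lam * g t))
        =O[nhdsWithin 1 (Set.Iio 1)] (fun t => (1 - t) ^ (5 / 4 : ℝ)) ∧
    Tendsto (fun t => (1 - t ^ 2) ^ (-(1 / 4) : ℝ) * Real.sin (sqrt lam * g t))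
      (nhdsWithin 1 (Set.Iio 1)) (nhds 0) := by
  obtain rfl : g = wkbPhase := funext hg
  have hsqrt : √lam = 4 * n := by
    rw [hlam, show (16 : ℝ) * n ^ 2 = (4 * n) ^ 2 by ring, sqrt_sq (by positivity)]
  have hsin := isBigO_sin_mul_wkbPhase n
  have hprod : (fun t => (1 - t ^ 2) ^ (-(1 / 4) : ℝ) * sin (4 * n * wkbPhase t))
      =O[𝓝[<] 1] (fun t => (1 - t) ^ (5 / 4 : ℝ)) := by
    refine (isBigO_one_sub_sq_rpow_neg.mul hsin).trans_eventuallyEq ?_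
    filter_upwards [self_mem_nhdsWithin] with t (ht : t < 1)
    rw [← rpow_add (by linarith)]; norm_num
  rw [hsqrt]
  exact ⟨hsin, hprod, hprod.trans_tendsto (tendsto_one_sub_rpow_nhdsLT_one (by norm_num))⟩

open Real Asymptotics Filter in
theorem stmt_16 (n : ℕ) (hn : 1 ≤ n) (lam : ℝ) (hlam : lam = 16 * (n : ℝ) ^ 2)
    (g : ℝ → ℝ)
    (hg : ∀ t, g t = (t * sqrt (1 - t ^ 2) + arcsin t) / 2) :
    (fun t => Real.sin (sqrt lam * g t)) =O[nhdsWithin 1 (Set.Iio 1)]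
      (fun t => (1 - t) ^ (3 / 2 : ℝ)) ∧
    (fun t => (1 - t ^ 2) ^ (-(1 / 4) : ℝ) * Real.sin (sqrt lam * g t))
        =O[nhdsWithin 1 (Set.Iio 1)] (fun t => (1 - t) ^ (5 / 4 : ℝ)) ∧
    Tendsto (fun t => (1 - t ^ 2) ^ (-(1 / 4) : ℝ) * Real.sin (sqrt lam * g t))
      (nhdsWithin 1 (Set.Iio 1)) (nhds 0) :=
  stmt_16_general n lam hlam g hg
end
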